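/- arXiv:2002.12334 — 3 statements merged into one kernel-verified Lean document; each statement's English description precedes it below -/
import Mathlib

section
/- For a potential function U : finite multisets of Z → [0,1], a distribution D on Z, and m ∈ ℕ, the distributional Shapley value ν(z; U, D, m) := E_{B ~ D^{m-1}}[φ(z; U, B ∪ {z})] (the expected data Shapley value of z in a dataset of m-1 i.i.d. points plus z) equals E_{k ~ Uniform[m], S ~ D^{k-1}}[U(S ∪ {z}) − U(S)], i.e., the expected marginal contribution of z to a set of i.i.d. samples from D of uniformly random cardinality in {0, ..., m-1}. -/
open MeasureTheory

/-- The marginal contribution of `z` to a tuple `S` of points, with respect to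
potential `U` on finite multisets. -/
noncomputable def margContrib {Z : Type*} (U : Multiset Z → ℝ) (z : Z) {n : ℕ}
    (S : Fin n → Z) : ℝ :=
  U (z ::ₘ ↑(List.ofFn S)) - U ↑(List.ofFn S)

/-- Distributional Shapley value:
`ν(z; U, D, m) = E_{k ~ Uniform[m], S ~ D^{k-1}}[U(S ∪ {z}) − U(S)]`. -/
noncomputable def distShapley {Z : Type*} [MeasurableSpace Z] (U : Multiset Z → ℝ)
    (D : Measure Z) (m : ℕ) (z : Z) : ℝ :=
  (1 / m : ℝ) * ∑ k ∈ Finset.Icc 1 m,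
    ∫ S : Fin (k - 1) → Z, margContrib U z S ∂(Measure.pi fun _ => D)

/-- Data Shapley value of a point `z` in the dataset `B ∪ {z}` of size `n + 1`,
where `B` is a tuple of the `n` remaining points:
`φ(z;U,B∪{z}) = (1/m) Σ_{k=1}^m (1/C(m-1,k-1)) Σ_{S ⊆ B\{z}, |S|=k-1} (U(S∪{z}) − U(S))`
with `m = n + 1`. -/
noncomputable def dataShapleyPt {Z : Type*} (U : Multiset Z → ℝ) (z : Z) {n : ℕ}
    (B : Fin n → Z) : ℝ :=
  (1 / (n + 1) : ℝ) * ∑ k ∈ Finset.Icc 1 (n + 1),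
    (1 / (n.choose (k - 1)) : ℝ) *
      ∑ S ∈ (Finset.univ : Finset (Fin n)).powersetCard (k - 1),
        (U (z ::ₘ Multiset.map B S.val) - U (Multiset.map B S.val))

section Aux
variable {Z : Type*} [MeasurableSpace Z]

lemma mp_fst {A B : Type*} [MeasurableSpace A] [MeasurableSpace B]
    (mu : Measure A) (nu : Measure B) [SigmaFinite nu] [IsProbabilityMeasure nu] :
    MeasurePreserving Prod.fst (mu.prod nu) mu :=
  ⟨measurable_fst, by rw [← Measure.fst]; exact Measure.fst_prod⟩

lemma aux_measPres (D : Measure Z) [IsProbabilityMeasure D] {j n : ℕ}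
    (e : Fin j → Fin n) (he : Function.Injective e) :
    MeasurePreserving (fun B : Fin n → Z => B ∘ e)
      (Measure.pi fun _ => D) (Measure.pi fun _ => D) := by
  classical
  set p : Fin n → Prop := fun k => k ∈ Set.range e with hp
  let e' : Fin j ≃ Subtype p := Equiv.ofInjective e he
  have h1 := measurePreserving_piEquivPiSubtypeProd (α := fun _ : Fin n => Z)
    (fun _ => D) p
  have h12 := (mp_fst _ _).comp h1
  have h3 := (measurePreserving_piCongrLeft (α := fun _ : Subtype p => Z)
    (fun _ : Subtype p => D) e').symm
  set f12 : (Fin n → Z) → (Subtype p → Z) :=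
    Prod.fst ∘ ⇑(MeasurableEquiv.piEquivPiSubtypeProd (fun _ : Fin n => Z) p) with hf12
  set f3 : (Subtype p → Z) → (Fin j → Z) :=
    ⇑(MeasurableEquiv.piCongrLeft (fun _ : Subtype p => Z) e').symm with hf3
  have hf12m : Measurable f12 :=
    measurable_fst.comp (MeasurableEquiv.piEquivPiSubtypeProd (fun _ : Fin n => Z) p).measurable
  have hf3m : Measurable f3 :=
    (MeasurableEquiv.piCongrLeft (fun _ : Subtype p => Z) e').symm.measurable
  have hfun : (fun B : Fin n → Z => B ∘ e) = f3 ∘ f12 := by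
    funext B
    ext i
    simp [f3, f12, MeasurableEquiv.piEquivPiSubtypeProd, MeasurableEquiv.piCongrLeft, e',
      Equiv.ofInjective_apply]
    rfl
  refine ⟨?_, ?_⟩
  · exact measurable_pi_lambda _ fun i => measurable_pi_apply (e i)
  · rw [hfun, ← Measure.map_map hf3m hf12m, h12.map_eq]
    convert h3.map_eq using 2 <;> congr!

lemma aux_integral (D : Measure Z) [IsProbabilityMeasure D] {j n : ℕ}
    (e : Fin j → Fin n) (he : Function.Injective e) (g : (Fin j → Z) → ℝ)
    (hg : Measurable g) :
    ∫ B : Fin n → Z, g (B ∘ e) ∂(Measure.pi fun _ => D)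
      = ∫ T : Fin j → Z, g T ∂(Measure.pi fun _ => D) := by
  have h := aux_measPres D e he
  rw [← h.map_eq, integral_map h.aemeasurable hg.aestronglyMeasurable]

lemma margContrib_meas {U : Multiset Z → ℝ}
    (hUmeas : ∀ n : ℕ, Measurable fun S : Fin n → Z => U ↑(List.ofFn S))
    (z : Z) (j : ℕ) : Measurable (margContrib U z (n := j)) := by
  have hcons : Measurable (fun S : Fin j → Z => (Fin.cons z S : Fin (j+1) → Z)) := by
    refine measurable_pi_lambda _ fun i => ?_
    refine Fin.cases ?_ ?_ i
    · simpa using (measurable_const : Measurable fun _ : Fin j → Z => z)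
    · intro k; simpa using measurable_pi_apply k
  have h1 : (fun S : Fin j → Z => U (z ::ₘ ↑(List.ofFn S)))
      = (fun T : Fin (j+1) → Z => U ↑(List.ofFn T)) ∘ (fun S => Fin.cons z S) := by
    funext S
    simp [Function.comp, List.ofFn_succ]
  have : Measurable fun S : Fin j → Z => U (z ::ₘ ↑(List.ofFn S)) := by
    rw [h1]; exact (hUmeas (j+1)).comp hcons
  exact this.sub (hUmeas j)

lemma margContrib_bound {U : Multiset Z → ℝ} (hU01 : ∀ S, U S ∈ Set.Icc (0 : ℝ) 1)
    (z : Z) {j : ℕ} (T : Fin j → Z) : ‖margContrib U z T‖ ≤ 1 := by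
  have h1 := hU01 (z ::ₘ ↑(List.ofFn T))
  have h2 := hU01 (↑(List.ofFn T) : Multiset Z)
  rw [Real.norm_eq_abs, margContrib, abs_sub_le_iff]
  constructor <;> [skip; skip] <;>
    · obtain ⟨a1, a2⟩ := h1; obtain ⟨b1, b2⟩ := h2; linarith

lemma margContrib_integrable {U : Multiset Z → ℝ}
    (hU01 : ∀ S, U S ∈ Set.Icc (0 : ℝ) 1)
    (hUmeas : ∀ n : ℕ, Measurable fun S : Fin n → Z => U ↑(List.ofFn S))
    (D : Measure Z) [IsProbabilityMeasure D] (z : Z) (j : ℕ) :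
    Integrable (margContrib U z (n := j)) (Measure.pi fun _ : Fin j => D) :=
  (integrable_const 1).mono' (margContrib_meas hUmeas z j).aestronglyMeasurable
    (Filter.Eventually.of_forall fun T => margContrib_bound hU01 z T)

lemma ofFn_orderIso {n : ℕ} (S : Finset (Fin n)) {j : ℕ} (h : S.card = j) :
    (↑(List.ofFn fun i => ((S.orderIsoOfFin h i : Fin n))) : Multiset (Fin n)) = S.val := by
  have he : Function.Injective (fun i => ((S.orderIsoOfFin h i : Fin n))) :=
    fun a b hab => (S.orderIsoOfFin h).injective (Subtype.ext hab)
  refine (Multiset.Nodup.ext (Multiset.coe_nodup.mpr (List.nodup_ofFn.mpr he)) S.nodup).mpr ?_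
  intro a
  simp only [Multiset.mem_coe, List.mem_ofFn, Set.mem_range, Finset.mem_val]
  constructor
  · rintro ⟨i, rfl⟩; exact (S.orderIsoOfFin h i).2
  · intro ha; exact ⟨(S.orderIsoOfFin h).symm ⟨a, ha⟩, by simp⟩

lemma key_multiset {n : ℕ} (S : Finset (Fin n)) {j : ℕ} (h : S.card = j)
    (B : Fin n → Z) :
    Multiset.map B S.val
      = ↑(List.ofFn (B ∘ fun i => ((S.orderIsoOfFin h i : Fin n)))) := by
  rw [← ofFn_orderIso S h, Multiset.map_coe, List.map_ofFn]

lemma integral_subset {U : Multiset Z → ℝ}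
    (hUmeas : ∀ n : ℕ, Measurable fun S : Fin n → Z => U ↑(List.ofFn S))
    (D : Measure Z) [IsProbabilityMeasure D] (z : Z) {n : ℕ}
    (S : Finset (Fin n)) {j : ℕ} (h : S.card = j) :
    ∫ B : Fin n → Z, (U (z ::ₘ Multiset.map B S.val) - U (Multiset.map B S.val))
        ∂(Measure.pi fun _ => D)
      = ∫ T : Fin j → Z, margContrib U z T ∂(Measure.pi fun _ => D) := by
  set e : Fin j → Fin n := fun i => ((S.orderIsoOfFin h i : Fin n)) with hee
  have he : Function.Injective e :=
    fun a b hab => (S.orderIsoOfFin h).injective (Subtype.ext hab)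
  have heq : (fun B : Fin n → Z =>
      (U (z ::ₘ Multiset.map B S.val) - U (Multiset.map B S.val)))
      = fun B => margContrib U z (B ∘ e) := by
    funext B
    rw [key_multiset S h B, margContrib]
  rw [heq]
  exact aux_integral D e he _ (margContrib_meas hUmeas z j)

lemma subsetTerm_integrable {U : Multiset Z → ℝ}
    (hU01 : ∀ S, U S ∈ Set.Icc (0 : ℝ) 1)
    (hUmeas : ∀ n : ℕ, Measurable fun S : Fin n → Z => U ↑(List.ofFn S))
    (D : Measure Z) [IsProbabilityMeasure D] (z : Z) {n : ℕ} (S : Finset (Fin n)) :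
    Integrable (fun B : Fin n → Z =>
        (U (z ::ₘ Multiset.map B S.val) - U (Multiset.map B S.val)))
      (Measure.pi fun _ : Fin n => D) := by
  set e : Fin S.card → Fin n := fun i => ((S.orderIsoOfFin rfl i : Fin n)) with hee
  have he : Function.Injective e :=
    fun a b hab => (S.orderIsoOfFin rfl).injective (Subtype.ext hab)
  have heq : (fun B : Fin n → Z =>
      (U (z ::ₘ Multiset.map B S.val) - U (Multiset.map B S.val)))
      = fun B => margContrib U z (B ∘ e) := by
    funext B
    rw [key_multiset S rfl B, margContrib]
  rw [heq]
  have hmeas : Measurable fun B : Fin n → Z => margContrib U z (B ∘ e) :=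
    (margContrib_meas hUmeas z S.card).comp
      (measurable_pi_lambda _ fun i => measurable_pi_apply (e i))
  exact (integrable_const 1).mono' hmeas.aestronglyMeasurable
    (Filter.Eventually.of_forall fun B => margContrib_bound hU01 z _)

end Aux

/-- The distributional Shapley value `ν(z; U, D, m)`, defined as the expected data
Shapley value of `z` in a dataset of `m - 1` i.i.d. points from `D` together with `z`,
equals the expected marginal contribution of `z` to a dataset of i.i.d. samples from `D`
of uniformly random cardinality in `{0, ..., m-1}`. -/
theorem distShapley_eq_expected_dataShapley {Z : Type*} [MeasurableSpace Z]
    (U : Multiset Z → ℝ) (hU01 : ∀ S, U S ∈ Set.Icc (0 : ℝ) 1)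
    (hUmeas : ∀ n : ℕ, Measurable fun S : Fin n → Z => U ↑(List.ofFn S))
    (D : Measure Z) [IsProbabilityMeasure D] (m : ℕ) (hm : 1 ≤ m) (z : Z) :
    (∫ B : Fin (m - 1) → Z, dataShapleyPt U z B ∂(Measure.pi fun _ => D))
      = distShapley U D m z := by
  obtain ⟨n, rfl⟩ : ∃ n, m = n + 1 := ⟨m - 1, (Nat.succ_pred_eq_of_pos hm).symm⟩
  show (∫ B : Fin n → Z, dataShapleyPt U z B ∂(Measure.pi fun _ => D))
      = distShapley U D (n + 1) z
  have hinner : ∀ k ∈ Finset.Icc 1 (n + 1),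
      (∫ B : Fin n → Z, ((1 / (n.choose (k - 1)) : ℝ) *
        ∑ S ∈ (Finset.univ : Finset (Fin n)).powersetCard (k - 1),
          (U (z ::ₘ Multiset.map B S.val) - U (Multiset.map B S.val)))
        ∂(Measure.pi fun _ => D))
      = ∫ T : Fin (k - 1) → Z, margContrib U z T ∂(Measure.pi fun _ => D) := by
    intro k hk
    obtain ⟨hk1, hk2⟩ := Finset.mem_Icc.mp hk
    rw [integral_const_mul, integral_finset_sum _
      (fun S _ => subsetTerm_integrable hU01 hUmeas D z S)]
    rw [Finset.sum_congr rfl (fun S hS =>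
      integral_subset hUmeas D z S (Finset.mem_powersetCard.mp hS).2)]
    rw [Finset.sum_const, Finset.card_powersetCard, Finset.card_univ,
      Fintype.card_fin, nsmul_eq_mul]
    have hC : ((n.choose (k - 1) : ℕ) : ℝ) ≠ 0 :=
      Nat.cast_ne_zero.mpr (Nat.choose_pos (by omega)).ne'
    field_simp
  unfold dataShapleyPt distShapley
  rw [integral_const_mul, integral_finset_sum _
    (fun k hk => ((integrable_finset_sum _
      (fun S _ => subsetTerm_integrable hU01 hUmeas D z S)).const_mul _))]
  congr 1
  · push_cast
    ring
  · exact Finset.sum_congr rfl hinner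
end

section
/- Let (Z, d) be a metric space, D a distribution on Z, and U : Z* → [0,1] a potential that is β(k)-Lipschitz stable with respect to d, meaning |U(S ∪ {z}) − U(S ∪ {z'})| ≤ β(k)·d(z, z') for all k ∈ ℕ, all S ∈ Z^{k-1}, and all z, z' ∈ Z, where β : ℕ → [0,1] is non-increasing. Then for all m ∈ ℕ and all z, z' ∈ Z, |ν(z; U, D, m) − ν(z'; U, D, m)| ≤ E_{k ~ Uniform[m]}[β(k)] · d(z, z'), where ν(z; U, D, m) = E_{k ~ Uniform[m], S ~ D^{k-1}}[U(S ∪ {z}) − U(S)]. -/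
open MeasureTheory

/-! The difference of the two Shapley values is an average over `k` of differences of
expectations under `D^{k-1}`. Each such difference is the expectation of
`U(S ∪ {z}) − U(S ∪ {z'})`, because the common term `U(S)` cancels, and Lipschitz stability
bounds that integrand by `β(k)·d(z,z')` pointwise. -/

section

variable {Z : Type*}

theorem cons_coe_ofFn {n : ℕ} (w : Z) (S : Fin n → Z) :
    (w ::ₘ ↑(List.ofFn S) : Multiset Z) = ↑(List.ofFn (Fin.cons w S : Fin (n + 1) → Z)) := by
  simp [List.ofFn_succ]

variable [MeasurableSpace Z]

theorem measurable_fin_cons {n : ℕ} (w : Z) :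
    Measurable fun S : Fin n → Z => (Fin.cons w S : Fin (n + 1) → Z) :=
  measurable_pi_iff.2 fun i => Fin.cases measurable_const measurable_pi_apply i

theorem measurable_cons_ofFn {γ : Type*} [MeasurableSpace γ] {U : Multiset Z → γ} {n : ℕ}
    (hU : Measurable fun S : Fin (n + 1) → Z => U ↑(List.ofFn S)) (w : Z) :
    Measurable fun S : Fin n → Z => U (w ::ₘ ↑(List.ofFn S)) := by
  simp only [cons_coe_ofFn]
  exact hU.comp (measurable_fin_cons w)

theorem integrable_margContrib {U : Multiset Z → ℝ} {a b : ℝ} (hU : ∀ S, U S ∈ Set.Icc a b)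
    (hUmeas : ∀ k : ℕ, Measurable fun S : Fin k → Z => U ↑(List.ofFn S)) {n : ℕ}
    (μ : Measure (Fin n → Z)) [IsFiniteMeasure μ] (w : Z) :
    Integrable (margContrib U w) μ :=
  (Integrable.of_mem_Icc a b (measurable_cons_ofFn (hUmeas (n + 1)) w).aemeasurable
      (ae_of_all _ fun _ => hU _)).sub
    (Integrable.of_mem_Icc a b (hUmeas n).aemeasurable (ae_of_all _ fun _ => hU _))

theorem abs_integral_margContrib_sub_le {U : Multiset Z → ℝ} {n : ℕ}
    {μ : Measure (Fin n → Z)} [IsProbabilityMeasure μ] {z z' : Z} {C : ℝ}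
    (hz : Integrable (margContrib U z) μ) (hz' : Integrable (margContrib U z') μ)
    (hC : ∀ S : Fin n → Z, |U (z ::ₘ ↑(List.ofFn S)) - U (z' ::ₘ ↑(List.ofFn S))| ≤ C) :
    |∫ S, margContrib U z S ∂μ - ∫ S, margContrib U z' S ∂μ| ≤ C := by
  rw [← integral_sub hz hz']
  simp only [margContrib, sub_sub_sub_cancel_right]
  simpa using norm_integral_le_of_norm_le_const
    (ae_of_all μ fun S => (Real.norm_eq_abs _).trans_le (hC S))

end

theorem abs_mul_sum_sub_mul_sum_le {ι : Type*} (s : Finset ι) {c : ℝ} (hc : 0 ≤ c)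
    {a b e : ι → ℝ} (h : ∀ i ∈ s, |a i - b i| ≤ e i) :
    |c * ∑ i ∈ s, a i - c * ∑ i ∈ s, b i| ≤ c * ∑ i ∈ s, e i := by
  rw [← mul_sub, ← Finset.sum_sub_distrib, abs_mul, abs_of_nonneg hc]
  gcongr
  exact (Finset.abs_sum_le_sum_abs _ _).trans (Finset.sum_le_sum h)

theorem distShapley_lipschitz_general {Z : Type*} [MeasurableSpace Z] [MetricSpace Z]
    (U : Multiset Z → ℝ) (hU01 : ∀ S, U S ∈ Set.Icc (0 : ℝ) 1)
    (hUmeas : ∀ n : ℕ, Measurable fun S : Fin n → Z => U ↑(List.ofFn S))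
    (β : ℕ → ℝ)
    (hLip : ∀ (S : Multiset Z) (z z' : Z),
      |U (z ::ₘ S) - U (z' ::ₘ S)| ≤ β (Multiset.card S + 1) * dist z z')
    (D : Measure Z) [IsProbabilityMeasure D] (m : ℕ) (z z' : Z) :
    |distShapley U D m z - distShapley U D m z'|
      ≤ ((1 / m : ℝ) * ∑ k ∈ Finset.Icc 1 m, β k) * dist z z' := by
  have hLevel : ∀ k ∈ Finset.Icc 1 m,
      |∫ S : Fin (k - 1) → Z, margContrib U z S ∂(Measure.pi fun _ => D) -
        ∫ S : Fin (k - 1) → Z, margContrib U z' S ∂(Measure.pi fun _ => D)|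
        ≤ β k * dist z z' := by
    intro k hk
    refine abs_integral_margContrib_sub_le (integrable_margContrib hU01 hUmeas _ z)
      (integrable_margContrib hU01 hUmeas _ z') fun S => ?_
    have hcard : Multiset.card (↑(List.ofFn S) : Multiset Z) + 1 = k := by
      simp only [Multiset.coe_card, List.length_ofFn]
      have := (Finset.mem_Icc.mp hk).1
      omega
    simpa only [hcard] using hLip (↑(List.ofFn S)) z z'
  calc |distShapley U D m z - distShapley U D m z'|
      ≤ (1 / m : ℝ) * ∑ k ∈ Finset.Icc 1 m, β k * dist z z' :=
        abs_mul_sum_sub_mul_sum_le _ (by positivity) hLevel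
    _ = ((1 / m : ℝ) * ∑ k ∈ Finset.Icc 1 m, β k) * dist z z' := by
        rw [← Finset.sum_mul, mul_assoc]

/-- If the potential `U : Z* → [0,1]` is `β(k)`-Lipschitz stable with respect to the
metric `d` (i.e. `|U(S ∪ {z}) − U(S ∪ {z'})| ≤ β(|S|+1)·d(z,z')` for all finite
multisets `S` and points `z, z'`), with `β : ℕ → [0,1]` non-increasing, then
`|ν(z;U,D,m) − ν(z';U,D,m)| ≤ E_{k ~ Uniform[m]}[β(k)] · d(z,z')`. -/
theorem distShapley_lipschitz {Z : Type*} [MeasurableSpace Z] [MetricSpace Z]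
    (U : Multiset Z → ℝ) (hU01 : ∀ S, U S ∈ Set.Icc (0 : ℝ) 1)
    (hUmeas : ∀ n : ℕ, Measurable fun S : Fin n → Z => U ↑(List.ofFn S))
    (β : ℕ → ℝ) (hβ01 : ∀ k, β k ∈ Set.Icc (0 : ℝ) 1) (hβmono : Antitone β)
    (hLip : ∀ (S : Multiset Z) (z z' : Z),
      |U (z ::ₘ S) - U (z' ::ₘ S)| ≤ β (Multiset.card S + 1) * dist z z')
    (D : Measure Z) [IsProbabilityMeasure D] (m : ℕ) (hm : 1 ≤ m) (z z' : Z) :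
    |distShapley U D m z - distShapley U D m z'|
      ≤ ((1 / m : ℝ) * ∑ k ∈ Finset.Icc 1 m, β k) * dist z z' :=
  distShapley_lipschitz_general U hU01 hUmeas β hLip D m z z'
end

section
/- Let D be a distribution on ℝ^d with mean μ, bounded second moments, and R² := E_{s~D}[‖s−μ‖²]. Define U(S) = R² − ‖μ̂_S − μ‖² with U(∅)=0, where μ̂_S is the empirical mean. Then for any fixed z ∈ ℝ^d and k ≥ 2, E_{S ~ D^{k-1}}[U(S ∪ {z}) − U(S)] = (2R² − ‖z−μ‖²)/(k(k-1)) − (R² − ‖z−μ‖²)/(k²(k-1)). -/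
open MeasureTheory

noncomputable def empMean {E : Type*} [NormedAddCommGroup E] [NormedSpace ℝ E]
    {n : ℕ} (S : Fin n → E) : E := (n : ℝ)⁻¹ • ∑ i, S i

/-!
With `m = k - 1`, `T = ∑ᵢ (Sᵢ - μ)` and `w = z - μ`, the two empirical means are
`μ + T / m` and `μ + (w + T) / k`, so the increment of `U` is `‖T‖² / m² - ‖w + T‖² / k²`.
The coordinates of `S` are independent and centred, hence `𝔼 ⟪w, T⟫ = 0` and all cross terms of
`𝔼 ‖T‖²` vanish, leaving `𝔼 ‖T‖² = m R²`.
-/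

open ProbabilityTheory Finset
open scoped RealInnerProductSpace

theorem MeasureTheory.MemLp.integrable_inner {α E : Type*} [MeasurableSpace α] {ρ : Measure α}
    [NormedAddCommGroup E] [InnerProductSpace ℝ E] {f g : α → E} (hf : MemLp f 2 ρ)
    (hg : MemLp g 2 ρ) : Integrable (fun x => ⟪f x, g x⟫) ρ :=
  (L2.integrable_inner (hf.toLp f) (hg.toLp g)).congr <| by
    filter_upwards [hf.coeFn_toLp, hg.coeFn_toLp] with x hfx hgx
    rw [hfx, hgx]

section IIDSum

variable {ι X E : Type*} [Fintype ι] [MeasurableSpace X] {ν : Measure X} [IsProbabilityMeasure ν]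
  [NormedAddCommGroup E] [InnerProductSpace ℝ E] {f : X → E}

theorem integral_sum_comp_eval (hf : Integrable f ν) :
    ∫ S, ∑ i, f (S i) ∂Measure.pi (fun _ : ι => ν) = Fintype.card ι • ∫ x, f x ∂ν := by
  rw [integral_finsetSum _ fun i _ => integrable_comp_eval hf]
  simp [integral_comp_eval (μ := fun _ : ι => ν) hf.1]

theorem integral_inner_comp_eval_of_ne [CompleteSpace E] (hf : Integrable f ν) {i j : ι}
    (hij : i ≠ j) :
    ∫ S, ⟪f (S i), f (S j)⟫ ∂Measure.pi (fun _ : ι => ν) = ⟪∫ x, f x ∂ν, ∫ x, f x ∂ν⟫ := by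
  have hindep := (iIndepFun_pi (μ := fun _ : ι => ν) (X := fun _ x => x)
    fun _ => aemeasurable_id).indepFun hij
  have hmap : ∀ k, (Measure.pi fun _ : ι => ν).map (fun S => S k) = ν :=
    fun k => (measurePreserving_eval _ k).map_eq
  have := hindep.integral_bilin_comp_comp (f := f) (g := f)
    (measurable_pi_apply i).aemeasurable (measurable_pi_apply j).aemeasurable
    (by rwa [hmap]) (by rwa [hmap]) (innerSL ℝ)
  rwa [integral_comp_eval (μ := fun _ : ι => ν) hf.1,
    integral_comp_eval (μ := fun _ : ι => ν) hf.1] at this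

theorem integral_norm_sum_comp_eval_sq [CompleteSpace E] (hf : MemLp f 2 ν)
    (hf0 : ∫ x, f x ∂ν = 0) :
    ∫ S, ‖∑ i, f (S i)‖ ^ 2 ∂Measure.pi (fun _ : ι => ν)
      = Fintype.card ι * ∫ x, ‖f x‖ ^ 2 ∂ν := by
  classical
  have hf_eval : ∀ i, MemLp (fun S => f (S i)) 2 (Measure.pi fun _ : ι => ν) :=
    fun i => hf.comp_measurePreserving (measurePreserving_eval _ i)
  have hpair : ∀ i j, ∫ S, ⟪f (S i), f (S j)⟫ ∂Measure.pi (fun _ : ι => ν)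
      = if i = j then ∫ x, ‖f x‖ ^ 2 ∂ν else 0 := by
    intro i j
    split_ifs with hij
    · subst hij
      simp_rw [real_inner_self_eq_norm_sq]
      exact integral_comp_eval (μ := fun _ : ι => ν) (hf.1.norm.pow 2)
    · rw [integral_inner_comp_eval_of_ne (hf.integrable one_le_two) hij, hf0, inner_zero_left]
  calc ∫ S, ‖∑ i, f (S i)‖ ^ 2 ∂Measure.pi (fun _ : ι => ν)
      = ∫ S, ∑ i, ∑ j, ⟪f (S i), f (S j)⟫ ∂Measure.pi (fun _ : ι => ν) := by
        simp_rw [← real_inner_self_eq_norm_sq, sum_inner, inner_sum]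
    _ = ∑ i, ∑ j, ∫ S, ⟪f (S i), f (S j)⟫ ∂Measure.pi (fun _ : ι => ν) := by
        rw [integral_finsetSum _ fun i _ => integrable_finsetSum _ fun j _ =>
          (hf_eval i).integrable_inner (hf_eval j)]
        simp_rw [integral_finsetSum _ fun j _ => (hf_eval _).integrable_inner (hf_eval j)]
    _ = Fintype.card ι * ∫ x, ‖f x‖ ^ 2 ∂ν := by
        simp [hpair]

end IIDSum

section EmpiricalMean

variable {E : Type*} [NormedAddCommGroup E] [NormedSpace ℝ E]

theorem empMean_sub {n : ℕ} (hn : n ≠ 0) (S : Fin n → E) (c : E) :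
    empMean S - c = (n : ℝ)⁻¹ • ∑ i, (S i - c) := by
  rw [empMean, sum_sub_distrib, smul_sub, sum_const, card_univ, Fintype.card_fin,
    ← Nat.cast_smul_eq_nsmul ℝ, smul_smul, inv_mul_cancel₀ (Nat.cast_ne_zero.2 hn), one_smul]

theorem empMean_cons_sub {n : ℕ} (z : E) (S : Fin n → E) (c : E) :
    empMean (Fin.cons z S : Fin (n + 1) → E) - c
      = ((n : ℝ) + 1)⁻¹ • ((z - c) + ∑ i, (S i - c)) := by
  rw [empMean_sub n.succ_ne_zero, Fin.sum_univ_succ]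
  simp only [Fin.cons_zero, Fin.cons_succ]
  push_cast
  rfl

end EmpiricalMean

theorem norm_empMean_sub_sq_sub_norm_empMean_cons_sub_sq {E : Type*} [NormedAddCommGroup E]
    [InnerProductSpace ℝ E] {n : ℕ} (hn : n ≠ 0) (z : E) (S : Fin n → E) (μ : E) :
    ‖empMean S - μ‖ ^ 2 - ‖empMean (Fin.cons z S) - μ‖ ^ 2
      = ((n : ℝ)⁻¹ ^ 2 - ((n : ℝ) + 1)⁻¹ ^ 2) * ‖∑ i, (S i - μ)‖ ^ 2
        - 2 * ((n : ℝ) + 1)⁻¹ ^ 2 * ⟪z - μ, ∑ i, (S i - μ)⟫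
        - ((n : ℝ) + 1)⁻¹ ^ 2 * ‖z - μ‖ ^ 2 := by
  rw [empMean_sub hn, empMean_cons_sub, norm_smul, norm_smul, mul_pow, mul_pow,
    norm_add_sq_real, Real.norm_eq_abs, Real.norm_eq_abs, sq_abs, sq_abs]
  ring

theorem integral_norm_empMean_sub_sq_sub_norm_empMean_cons_sub_sq {E : Type*}
    [NormedAddCommGroup E] [InnerProductSpace ℝ E] [CompleteSpace E] [MeasurableSpace E]
    (D : Measure E) [IsProbabilityMeasure D] (hD : MemLp id 2 D) (μ : E) (hμ : μ = ∫ s, s ∂D)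
    (z : E) {n : ℕ} (hn : n ≠ 0) :
    ∫ S : Fin n → E, (‖empMean S - μ‖ ^ 2 - ‖empMean (Fin.cons z S) - μ‖ ^ 2)
        ∂Measure.pi (fun _ => D)
      = (∫ s, ‖s - μ‖ ^ 2 ∂D) / n
        - (‖z - μ‖ ^ 2 + n * ∫ s, ‖s - μ‖ ^ 2 ∂D) / ((n : ℝ) + 1) ^ 2 := by
  set T : (Fin n → E) → E := fun S => ∑ i, (S i - μ)
  have hcentered : MemLp (fun s => s - μ) 2 D := hD.sub (memLp_const μ)
  have hmean : ∫ s, s - μ ∂D = 0 := by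
    rw [integral_sub (f := fun s => s) (hD.integrable one_le_two) (integrable_const μ),
      integral_const]
    simp [hμ]
  have hT : MemLp T 2 (Measure.pi fun _ => D) := memLp_finsetSum _ fun i _ =>
    hcentered.comp_measurePreserving (measurePreserving_eval _ i)
  have hT_sq : ∫ S, ‖T S‖ ^ 2 ∂Measure.pi (fun _ => D) = n * ∫ s, ‖s - μ‖ ^ 2 ∂D := by
    simpa only [Fintype.card_fin] using integral_norm_sum_comp_eval_sq (ι := Fin n) hcentered hmean
  have hT_inner : ∫ S, ⟪z - μ, T S⟫ ∂Measure.pi (fun _ => D) = 0 := by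
    rw [integral_inner (hT.integrable one_le_two),
      integral_sum_comp_eval (hcentered.integrable one_le_two), hmean, smul_zero, inner_zero_right]
  have hT_sq_int : Integrable (fun S => ‖T S‖ ^ 2) (Measure.pi fun _ => D) :=
    hT.integrable_norm_pow two_ne_zero
  have hT_inner_int : Integrable (fun S => ⟪z - μ, T S⟫) (Measure.pi fun _ => D) :=
    (hT.const_inner (z - μ)).integrable one_le_two
  simp_rw [norm_empMean_sub_sq_sub_norm_empMean_cons_sub_sq hn]
  rw [integral_sub ?_ (integrable_const _),
    integral_sub (hT_sq_int.const_mul _) (hT_inner_int.const_mul _), integral_const_mul,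
    integral_const_mul, hT_sq, hT_inner, integral_const]
  · simp only [inv_pow, mul_zero, sub_zero, probReal_univ, smul_eq_mul, one_mul]
    field_simp
    ring
  · exact (hT_sq_int.const_mul _).sub (hT_inner_int.const_mul _)

/-- For the mean-estimation potential `U(S) = R² − ‖μ̂_S − μ‖²` and any fixed
`z ∈ ℝ^d` and `k ≥ 2`,
`E_{S ~ D^{k-1}}[U(S ∪ {z}) − U(S)]
  = (2R² − ‖z−μ‖²)/(k(k−1)) − (R² − ‖z−μ‖²)/(k²(k−1))`. -/
theorem meanEstimation_marginal_contribution {d : ℕ}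
    (D : Measure (EuclideanSpace ℝ (Fin d))) [IsProbabilityMeasure D]
    (μ : EuclideanSpace ℝ (Fin d)) (hμ : μ = ∫ s, s ∂D)
    (hmom : Integrable (fun s => ‖s‖ ^ 2) D)
    (R2 : ℝ) (hR2 : R2 = ∫ s, ‖s - μ‖ ^ 2 ∂D)
    (z : EuclideanSpace ℝ (Fin d)) (k : ℕ) (hk : 2 ≤ k) :
    (∫ S : Fin (k - 1) → EuclideanSpace ℝ (Fin d),
        ((R2 - ‖empMean (Fin.cons z S) - μ‖ ^ 2) - (R2 - ‖empMean S - μ‖ ^ 2))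
        ∂(Measure.pi fun _ => D))
      = (2 * R2 - ‖z - μ‖ ^ 2) / ((k : ℝ) * ((k : ℝ) - 1))
        - (R2 - ‖z - μ‖ ^ 2) / ((k : ℝ) ^ 2 * ((k : ℝ) - 1)) := by
  have hD : MemLp id 2 D := (memLp_two_iff_integrable_sq_norm aestronglyMeasurable_id).2 hmom
  have hcast : ((k - 1 : ℕ) : ℝ) = k - 1 := by rw [Nat.cast_sub (by omega), Nat.cast_one]
  have hk1 : (k : ℝ) - 1 ≠ 0 := by rw [← hcast]; exact Nat.cast_ne_zero.2 (by omega)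
  simp_rw [sub_sub_sub_cancel_left]
  rw [integral_norm_empMean_sub_sq_sub_norm_empMean_cons_sub_sq D hD μ hμ z (by omega), ← hR2,
    hcast, sub_add_cancel]
  field_simp
  ring
end
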